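/- arXiv:1606.04664 — 3 statements merged into one kernel-verified Lean document; each statement's English description precedes it below -/
import Mathlib

section
/- With the same setup as the previous identity (Kähler curvature symmetries, A₁, A₂, A₃ defined from fixed u, w ∈ V), for every Y ∈ V: R(Y,u)(Jw) = (1/2) R(Jw, u)Y - (1/2) A₁Y + (1/4) A₂Y + (1/4) A₃Y. -/
open scoped InnerProductSpace

variable {V : Type*} [NormedAddCommGroup V] [InnerProductSpace ℝ V]

theorem stmt_4 (J : V →ₗ[ℝ] V) (hJ2 : ∀ x, J (J x) = -x)
    (hJh : ∀ x y, ⟪J x, J y⟫_ℝ = ⟪x, y⟫_ℝ)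
    (R : V →ₗ[ℝ] V →ₗ[ℝ] V →ₗ[ℝ] V)
    (hanti : ∀ X Y Z : V, R X Y Z = - R Y X Z)
    (hpair : ∀ X Y Z W : V, ⟪R X Y Z, W⟫_ℝ = ⟪R Z W X, Y⟫_ℝ)
    (hbianchi : ∀ X Y Z : V, R X Y Z + R Y Z X + R Z X Y = 0)
    (hJcomm : ∀ X Y Z : V, R X Y (J Z) = J (R X Y Z))
    (hJJ : ∀ X Y Z : V, R (J X) (J Y) Z = R X Y Z)
    (u w : V) (A₁ A₂ A₃ : V → V)
    (hA₁ : ∀ Y, A₁ Y = R Y w (J u) - R Y u (J w))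
    (hA₂ : ∀ Y, A₂ Y = R Y w (J u) + R Y (J u) w)
    (hA₃ : ∀ Y, A₃ Y = R Y u (J w) + R Y (J w) u) :
    ∀ Y : V, R Y u (J w)
      = (1/2 : ℝ) • R (J w) u Y - (1/2 : ℝ) • A₁ Y
        + (1/4 : ℝ) • A₂ Y + (1/4 : ℝ) • A₃ Y := by
  intro Y
  -- R (J w) u Y = R (J u) w Y
  have hc : R (J w) u Y = R (J u) w Y := by
    have h := hJJ (J w) u Y
    rw [hJ2] at h
    have h' : R (-w) (J u) Y = - R (w) (J u) Y := by simp
    rw [h'] at h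
    rw [← h, hanti w (J u)]
    exact (neg_neg _)
  have e1 : R w Y (J u) = - J (R Y w u) := by
    rw [hanti w Y, hJcomm]
  have e2 : R u Y (J w) = - J (R Y u w) := by
    rw [hanti u Y, hJcomm]
  have e3 : R Y u (J w) = J (R Y u w) := hJcomm Y u w
  have e4 : R Y w (J u) = J (R Y w u) := hJcomm Y w u
  have hb2 := hbianchi Y (J u) w
  have hb3 := hbianchi Y (J w) u
  rw [e1] at hb2
  rw [e2] at hb3
  -- key identity
  have hK : R Y u (J w) + R Y (J u) w = R Y (J w) u + R Y w (J u) := by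
    linear_combination (norm := module) e3 - e4 + hb2 - hb3 + hc
  have hB : R (J w) u Y = R Y u (J w) - R Y (J w) u := by
    have h := hbianchi (J w) u Y
    have h2 : R u Y (J w) = - R Y u (J w) := hanti u Y (J w)
    linear_combination (norm := module) h - h2
  rw [hA₁, hA₂, hA₃, hB]
  linear_combination (norm := module) (-(1/4 : ℝ)) • hK
end

section
/- Let V be a real inner product space with compatible complex structure J and curvature tensor R satisfying the Kähler curvature symmetries. Fix u, w ∈ V. Then for all W ∈ V: R(J W, u)w = -R(W, w)(J u) + R(J w, u)W. (Identity (rr4) of the paper.) -/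
open scoped InnerProductSpace

variable {V : Type*} [NormedAddCommGroup V] [InnerProductSpace ℝ V]

theorem stmt_8 (J : V →ₗ[ℝ] V) (hJ2 : ∀ x, J (J x) = -x)
    (hJh : ∀ x y, ⟪J x, J y⟫_ℝ = ⟪x, y⟫_ℝ)
    (R : V →ₗ[ℝ] V →ₗ[ℝ] V →ₗ[ℝ] V)
    (hanti : ∀ X Y Z : V, R X Y Z = - R Y X Z)
    (hpair : ∀ X Y Z W : V, ⟪R X Y Z, W⟫_ℝ = ⟪R Z W X, Y⟫_ℝ)
    (hbianchi : ∀ X Y Z : V, R X Y Z + R Y Z X + R Z X Y = 0)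
    (hJcomm : ∀ X Y Z : V, R X Y (J Z) = J (R X Y Z))
    (hJJ : ∀ X Y Z : V, R (J X) (J Y) Z = R X Y Z)
    (u w : V) :
    ∀ W : V, R (J W) u w = - R W w (J u) + R (J w) u W := by
  intro W
  have key : ∀ X Y Z : V, R (J X) Y Z = - R X (J Y) Z := by
    intro X Y Z
    have h := hJJ X (J Y) Z
    rw [hJ2, map_neg] at h
    simp only [LinearMap.neg_apply] at h
    rw [← h, neg_neg]
  have hb := hbianchi W (J u) w
  rw [hanti (J u) w W, hanti w W (J u)] at hb
  rw [key W u w, key w u W]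
  linear_combination (norm := module) - hb
end

section
/- Let V be a real inner product space, J a compatible complex structure, and R a trilinear tensor satisfying the Kähler curvature symmetries. Fix u, w ∈ V. Then for all Y ∈ V: R(Y, w)(Ju) + R(Y, u)(Jw) = 2 R(Jw, u)Y + R(Y, Ju)w + R(Y, Jw)u. -/
open scoped InnerProductSpace

variable {V : Type*} [NormedAddCommGroup V] [InnerProductSpace ℝ V]

theorem stmt_19 (J : V →ₗ[ℝ] V) (hJ2 : ∀ x, J (J x) = -x)
    (hJh : ∀ x y, ⟪J x, J y⟫_ℝ = ⟪x, y⟫_ℝ)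
    (R : V →ₗ[ℝ] V →ₗ[ℝ] V →ₗ[ℝ] V)
    (hanti : ∀ X Y Z : V, R X Y Z = - R Y X Z)
    (hpair : ∀ X Y Z W : V, ⟪R X Y Z, W⟫_ℝ = ⟪R Z W X, Y⟫_ℝ)
    (hbianchi : ∀ X Y Z : V, R X Y Z + R Y Z X + R Z X Y = 0)
    (hJcomm : ∀ X Y Z : V, R X Y (J Z) = J (R X Y Z))
    (hJJ : ∀ X Y Z : V, R (J X) (J Y) Z = R X Y Z)
    (u w : V) :
    ∀ Y : V, R Y w (J u) + R Y u (J w)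
      = (2 : ℝ) • R (J w) u Y + R Y (J u) w + R Y (J w) u := by
  intro Y
  have hswap : ∀ X Z W : V, R X (J Z) W = - R (J X) Z W := by
    intro X Z W
    have h := hJJ X (J Z) W
    rw [hJ2] at h
    simpa using h.symm
  have e1 : R Y w (J u) = R (J w) u Y + R Y (J u) w := by
    have h := hbianchi w (J u) Y
    rw [hswap w u Y, hanti (J u) Y w] at h
    linear_combination (norm := module) h
  have e2 : R Y u (J w) = R (J w) u Y + R Y (J w) u := by
    have h := hbianchi u (J w) Y
    rw [hanti u (J w) Y, hanti (J w) Y u] at h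
    linear_combination (norm := module) h
  rw [e1, e2, two_smul]
  abel
end
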